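/- Let n ≥ 1 and let S = {0, 1, …, 2n}. For every configuration g ∈ Υ̂_{0,n} there exist a natural number m ≥ 1, charges f_1, …, f_m ∈ Ξ̂(0,n), and a sign ε ∈ {+1, −1} such that Q(f_m) ⋯ Q(f_1) e_{g₀} = ε e_g, where g₀ is the all-false configuration on S. (Operator form: every classical open-edge supersymmetric ground state is obtained, up to sign, by applying finitely many local fermion charge operators to the Fock vector.) -/

import Mathlib

/-!
A charge `f ∈ Ξ̂_{k,l}` whose signs are opposite to the occupations of `h` on `{2k, …, 2l}`
maps `e_h` to `±e_{h'}`, where `h'` is `h` flipped on that window; the Jordan–Wigner strings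
only contribute the sign. So it suffices to reach every configuration of `Υ̂_{0,n}` from the
empty one by admissible window flips. Going backwards, remove the rightmost domain wall of `h`
(a bond `(m, m + 1)` across which `h` changes) by flipping `{0, …, m}`: for even `m = 2l` this
is the window `[0, l]`, for odd `m = 2k - 1` it is the flip of `{2k, …, 2n}` followed by the
flip of all of `S`. The absence of forbidden triplets and the boundary conditions are exactly
what make these flips admissible. Once no wall is left the configuration is empty or full.
-/

namespace Nicolai

/-- Configurations on the finite interval `S = {a, …, b}` of integers:
`true` = occupied, `false` = empty. -/
abbrev Config (a b : ℤ) : Type := {i : ℤ // i ∈ Finset.Icc a b} → Bool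

/-- The Hilbert space `ℋ_S` with orthonormal basis indexed by configurations. -/
abbrev Hs (a b : ℤ) : Type := EuclideanSpace ℂ (Config a b)

/-- The basis vector `e_g` associated to the configuration `g`. -/
noncomputable def e (a b : ℤ) (g : Config a b) : Hs a b := EuclideanSpace.single g 1

/-- The Jordan–Wigner sign exponent: the number of occupied sites strictly to the left of `i`. -/
noncomputable def signCount (a b : ℤ) (g : Config a b) (i : ℤ) : ℕ :=
  (Finset.univ.filter fun j : {x : ℤ // x ∈ Finset.Icc a b} => j.1 < i ∧ g j = true).card

/-- The annihilation operator `c_i` (zero if `i ∉ S`). -/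
noncomputable def cAnn (a b : ℤ) (i : ℤ) : Module.End ℂ (Hs a b) where
  toFun ψ := WithLp.toLp 2 fun g =>
    if hi : i ∈ Finset.Icc a b then
      if g ⟨i, hi⟩ = false then
        ((-1 : ℂ) ^ signCount a b g i) * ψ (Function.update g ⟨i, hi⟩ true)
      else 0
    else 0
  map_add' ψ φ := by
    ext g
    simp only [PiLp.add_apply, PiLp.toLp_apply]
    split_ifs <;> simp [mul_add]
  map_smul' c ψ := by
    ext g
    simp only [PiLp.smul_apply, smul_eq_mul, RingHom.id_apply, PiLp.toLp_apply]
    split_ifs <;> ring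

/-- The creation operator `c*_i` (zero if `i ∉ S`). -/
noncomputable def cCr (a b : ℤ) (i : ℤ) : Module.End ℂ (Hs a b) where
  toFun ψ := WithLp.toLp 2 fun g =>
    if hi : i ∈ Finset.Icc a b then
      if g ⟨i, hi⟩ = true then
        ((-1 : ℂ) ^ signCount a b g i) * ψ (Function.update g ⟨i, hi⟩ false)
      else 0
    else 0
  map_add' ψ φ := by
    ext g
    simp only [PiLp.add_apply, PiLp.toLp_apply]
    split_ifs <;> simp [mul_add]
  map_smul' c ψ := by
    ext g
    simp only [PiLp.smul_apply, smul_eq_mul, RingHom.id_apply, PiLp.toLp_apply]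
    split_ifs <;> ring

/-- `q_{2i} = c_{2i+1} c*_{2i} c_{2i−1}`. -/
noncomputable def qOp (a b i : ℤ) : Module.End ℂ (Hs a b) :=
  cAnn a b (2 * i + 1) * cCr a b (2 * i) * cAnn a b (2 * i - 1)

/-- The Nicolai supercharge `Q[k,l] = Σ_{i=k}^{l} q_{2i}`. -/
noncomputable def QNic (a b k l : ℤ) : Module.End ℂ (Hs a b) :=
  ∑ i ∈ Finset.Icc k l, qOp a b i

/-- Membership in `Ξ̂_{k,l}`: a `{−1,+1}`-valued function on `{2k, …, 2l}` with no
forbidden sign triplet at interior even sites, constant on each two-site edge. -/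
def memXi (k l : ℤ) (f : ℤ → ℤ) : Prop :=
  (∀ i ∈ Finset.Icc (2 * k) (2 * l), f i = 1 ∨ f i = -1) ∧
  (∀ i : ℤ, k < i → i < l →
    ¬(f (2 * i - 1) = -1 ∧ f (2 * i) = 1 ∧ f (2 * i + 1) = -1) ∧
    ¬(f (2 * i - 1) = 1 ∧ f (2 * i) = -1 ∧ f (2 * i + 1) = 1)) ∧
  f (2 * k) = f (2 * k + 1) ∧ f (2 * l - 1) = f (2 * l)

/-- `ζ_i(+1) = c*_i`, `ζ_i(−1) = c_i`. -/
noncomputable def zeta (a b i : ℤ) (v : ℤ) : Module.End ℂ (Hs a b) :=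
  if v = 1 then cCr a b i else if v = -1 then cAnn a b i else 0

/-- The local fermion operator `Q(f) = ζ_{2k}(f(2k)) ζ_{2k+1}(f(2k+1)) ⋯ ζ_{2l}(f(2l))`,
the product taken in increasing site order. -/
noncomputable def QF (a b k l : ℤ) (f : ℤ → ℤ) : Module.End ℂ (Hs a b) :=
  ((List.range (2 * l - 2 * k + 1).toNat).map
    (fun j => zeta a b (2 * k + (j : ℤ)) (f (2 * k + (j : ℤ))))).prod

/-- `g` has a forbidden triplet at the even site `2i`. -/
def forbiddenAt (g : ℤ → Bool) (i : ℤ) : Prop :=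
  (g (2 * i - 1) = false ∧ g (2 * i) = true ∧ g (2 * i + 1) = false) ∨
  (g (2 * i - 1) = true ∧ g (2 * i) = false ∧ g (2 * i + 1) = true)

/-- Membership in `Υ̂_{k,l}`: no forbidden triplet at interior even sites and the
open SUSY boundary condition (only the values on `{2k, …, 2l}` are relevant). -/
def memUps (k l : ℤ) (g : ℤ → Bool) : Prop :=
  (∀ i : ℤ, k < i → i < l → ¬ forbiddenAt g i) ∧
  g (2 * k) = g (2 * k + 1) ∧ g (2 * l - 1) = g (2 * l)

/-- Extend a configuration on `S` to all of `ℤ` by `false`. -/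
noncomputable def ext (a b : ℤ) (g : Config a b) : ℤ → Bool :=
  fun i => if h : i ∈ Finset.Icc a b then g ⟨i, h⟩ else false

/-- The charge `f ∈ Ξ̂_{k,l}` is applicable to the configuration `g`. -/
def applicable (k l : ℤ) (f : ℤ → ℤ) (g : ℤ → Bool) : Prop :=
  ∀ i : ℤ, 2 * k ≤ i → i ≤ 2 * l → (f i = 1 → g i = false) ∧ (f i = -1 → g i = true)

/-- The configuration `f·g` resulting from the action of the charge `f ∈ Ξ̂_{k,l}` on `g`. -/
def applyCharge (k l : ℤ) (f : ℤ → ℤ) (g : ℤ → Bool) : ℤ → Bool :=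
  fun i => if 2 * k ≤ i ∧ i ≤ 2 * l then decide (f i = 1) else g i

/-- `Reachable p q g₀ g`: `g` is obtained from `g₀` by finitely many applications of
applicable charges from `Ξ̂(p,q) = ⋃_{p ≤ k < l ≤ q} Ξ̂_{k,l}`. -/
inductive Reachable (p q : ℤ) : (ℤ → Bool) → (ℤ → Bool) → Prop
  | refl (g : ℤ → Bool) : Reachable p q g g
  | step {g₀ g : ℤ → Bool} (k l : ℤ) (f : ℤ → ℤ) :
      Reachable p q g₀ g → p ≤ k → k < l → l ≤ q → memXi k l f → applicable k l f g →
      Reachable p q g₀ (applyCharge k l f g)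

/-- The fermion parity operator `P e_g = (−1)^{#occupied sites} e_g`. -/
noncomputable def parity (a b : ℤ) : Module.End ℂ (Hs a b) where
  toFun ψ := WithLp.toLp 2 fun g =>
    ((-1 : ℂ) ^ (Finset.univ.filter fun j : {x : ℤ // x ∈ Finset.Icc a b} => g j = true).card)
      * ψ g
  map_add' ψ φ := by
    ext g
    simp only [PiLp.add_apply, PiLp.toLp_apply]
    ring
  map_smul' c ψ := by
    ext g
    simp only [PiLp.smul_apply, smul_eq_mul, RingHom.id_apply, PiLp.toLp_apply]
    ring

section Operators

variable {a b : ℤ}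

def restrict (a b : ℤ) (h : ℤ → Bool) : Config a b := fun x => h x.1

lemma restrict_ext (g : Config a b) : restrict a b (ext a b g) = g := by
  funext x
  simp [restrict, ext, x.2]

lemma restrict_update (h : ℤ → Bool) {i : ℤ} (hi : i ∈ Finset.Icc a b) (v : Bool) :
    restrict a b (Function.update h i v) = Function.update (restrict a b h) ⟨i, hi⟩ v := by
  funext x
  simp only [restrict, Function.update_apply, Subtype.ext_iff]

lemma e_apply (h g : Config a b) : e a b h g = if g = h then 1 else 0 :=
  PiLp.single_apply 2 ℂ h 1 g

lemma signCount_update (g : Config a b) (x : {t : ℤ // t ∈ Finset.Icc a b}) (v : Bool)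
    {i : ℤ} (hx : i ≤ x.1) : signCount a b (Function.update g x v) i = signCount a b g i := by
  unfold signCount
  congr 1
  refine Finset.filter_congr fun j _ => ?_
  by_cases hj : j = x
  · subst hj
    simp only [Function.update_self]
    constructor <;> rintro ⟨hlt, -⟩ <;> omega
  · rw [Function.update_of_ne hj]

/-- The common shape of `c_i` and `c*_i` on a basis vector: `v = true` for `c*_i`,
`v = false` for `c_i`. -/
lemma toLp_ladder_eq {i : ℤ} (hi : i ∈ Finset.Icc a b) (v : Bool) (h : Config a b)
    (hv : h ⟨i, hi⟩ = !v) :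
    (WithLp.toLp 2 fun g : Config a b => if g ⟨i, hi⟩ = v then
        (-1 : ℂ) ^ signCount a b g i * e a b h (Function.update g ⟨i, hi⟩ (!v)) else 0 : Hs a b)
      = (-1 : ℂ) ^ signCount a b h i • e a b (Function.update h ⟨i, hi⟩ v) := by
  ext g
  simp only [PiLp.smul_apply, smul_eq_mul, e_apply]
  by_cases hg : g = Function.update h ⟨i, hi⟩ v
  · subst hg
    simp [Function.update_idem, hv, signCount_update]
  · have hback : g ⟨i, hi⟩ = v → Function.update g ⟨i, hi⟩ (!v) ≠ h := by
      rintro hgv rfl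
      exact hg (by rw [Function.update_idem, ← hgv, Function.update_eq_self])
    split_ifs <;> simp_all

lemma cCr_apply_e {i : ℤ} (hi : i ∈ Finset.Icc a b) (h : Config a b) (hh : h ⟨i, hi⟩ = false) :
    cCr a b i (e a b h)
      = (-1 : ℂ) ^ signCount a b h i • e a b (Function.update h ⟨i, hi⟩ true) := by
  simp only [cCr, LinearMap.coe_mk, AddHom.coe_mk, dif_pos hi]
  exact toLp_ladder_eq hi true h hh

lemma cAnn_apply_e {i : ℤ} (hi : i ∈ Finset.Icc a b) (h : Config a b) (hh : h ⟨i, hi⟩ = true) :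
    cAnn a b i (e a b h)
      = (-1 : ℂ) ^ signCount a b h i • e a b (Function.update h ⟨i, hi⟩ false) := by
  simp only [cAnn, LinearMap.coe_mk, AddHom.coe_mk, dif_pos hi]
  exact toLp_ladder_eq hi false h hh

lemma zeta_apply_e {i v : ℤ} (hi : i ∈ Finset.Icc a b) (h : ℤ → Bool)
    (hv : (v = 1 ∧ h i = false) ∨ (v = -1 ∧ h i = true)) :
    ∃ N : ℕ, zeta a b i v (e a b (restrict a b h))
      = (-1 : ℂ) ^ N • e a b (restrict a b (Function.update h i (decide (v = 1)))) := by
  rw [restrict_update h hi]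
  rcases hv with ⟨rfl, hh⟩ | ⟨rfl, hh⟩
  · exact ⟨_, by simpa [zeta] using cCr_apply_e hi (restrict a b h) hh⟩
  · exact ⟨_, by simpa [zeta] using cAnn_apply_e hi (restrict a b h) hh⟩

lemma list_prod_zeta_apply_e (f : ℤ → ℤ) (h : ℤ → Bool) {sites : List ℤ} (hnd : sites.Nodup)
    (hS : ∀ i ∈ sites, i ∈ Finset.Icc a b)
    (happ : ∀ i ∈ sites, (f i = 1 ∧ h i = false) ∨ (f i = -1 ∧ h i = true)) :
    ∃ N : ℕ, (sites.map fun i => zeta a b i (f i)).prod (e a b (restrict a b h))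
      = (-1 : ℂ) ^ N •
          e a b (restrict a b fun i => if i ∈ sites then decide (f i = 1) else h i) := by
  induction sites with
  | nil => exact ⟨0, by simp⟩
  | cons x rest ih =>
    obtain ⟨hx, hnd⟩ := List.nodup_cons.mp hnd
    obtain ⟨N, hN⟩ := ih hnd (fun i hi => hS i (.tail x hi)) (fun i hi => happ i (.tail x hi))
    obtain ⟨M, hM⟩ := zeta_apply_e (hS x (.head rest))
      (fun i => if i ∈ rest then decide (f i = 1) else h i)
      (by simpa [hx] using happ x (.head rest))
    refine ⟨M + N, ?_⟩
    rw [List.map_cons, List.prod_cons, Module.End.mul_apply, hN, map_smul, hM, smul_smul,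
      ← pow_add, add_comm N]
    congr 3
    funext i
    by_cases hix : i = x <;> simp [hix]

lemma mem_window_iff {k l i : ℤ} :
    i ∈ (List.range (2 * l - 2 * k + 1).toNat).map (fun j : ℕ => 2 * k + (j : ℤ))
      ↔ 2 * k ≤ i ∧ i ≤ 2 * l := by
  simp only [List.mem_map, List.mem_range]
  constructor
  · rintro ⟨j, hj, rfl⟩
    omega
  · intro hi
    exact ⟨(i - 2 * k).toNat, by omega, by omega⟩

lemma QF_apply_e {k l : ℤ} (ha : a ≤ 2 * k) (hb : 2 * l ≤ b) (f : ℤ → ℤ) (h : ℤ → Bool)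
    (hf : ∀ i ∈ Finset.Icc (2 * k) (2 * l), f i = 1 ∨ f i = -1) (happ : applicable k l f h) :
    ∃ N : ℕ, QF a b k l f (e a b (restrict a b h))
      = (-1 : ℂ) ^ N • e a b (restrict a b (applyCharge k l f h)) := by
  set sites := (List.range (2 * l - 2 * k + 1).toNat).map fun j : ℕ => 2 * k + (j : ℤ)
  have hnd : sites.Nodup := List.nodup_range.map fun _ _ hij => by simpa using hij
  have hwin : ∀ i ∈ sites, 2 * k ≤ i ∧ i ≤ 2 * l := fun i hi => mem_window_iff.mp hi
  have hQF : QF a b k l f = (sites.map fun i => zeta a b i (f i)).prod := by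
    refine (congrArg (fun L : List ℤ => (L.map fun j => zeta a b (2 * k + j) (f (2 * k + j))).prod)
      (List.flatMap_pure_eq_map (fun j : ℕ => (j : ℤ)) _)).trans ?_
    simp only [sites, List.map_map]
    rfl
  have hS : ∀ i ∈ sites, i ∈ Finset.Icc a b := fun i hi => by
    have := hwin i hi
    simp only [Finset.mem_Icc]
    omega
  obtain ⟨N, hN⟩ := list_prod_zeta_apply_e f h hnd hS fun i hi => by
    obtain ⟨h1, h2⟩ := happ i (hwin i hi).1 (hwin i hi).2
    rcases hf i (Finset.mem_Icc.mpr (hwin i hi)) with hfi | hfi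
    · exact .inl ⟨hfi, h1 hfi⟩
    · exact .inr ⟨hfi, h2 hfi⟩
  refine ⟨N, ?_⟩
  rw [hQF, hN]
  congr
  funext i
  simp [applyCharge, sites, mem_window_iff]

end Operators

section Flips

def chargeOf (h : ℤ → Bool) : ℤ → ℤ := fun i => if h i then -1 else 1

def flipOn (s t : ℤ) (h : ℤ → Bool) : ℤ → Bool := fun i => if s ≤ i ∧ i ≤ t then !h i else h i

variable {h : ℤ → Bool}

lemma chargeOf_eq_one_iff {i : ℤ} : chargeOf h i = 1 ↔ h i = false := by
  cases hi : h i <;> simp [chargeOf, hi]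

lemma chargeOf_eq_neg_one_iff {i : ℤ} : chargeOf h i = -1 ↔ h i = true := by
  cases hi : h i <;> simp [chargeOf, hi]

lemma applicable_chargeOf (k l : ℤ) (h : ℤ → Bool) : applicable k l (chargeOf h) h :=
  fun _ _ _ => ⟨chargeOf_eq_one_iff.mp, chargeOf_eq_neg_one_iff.mp⟩

lemma applyCharge_chargeOf (k l : ℤ) (h : ℤ → Bool) :
    applyCharge k l (chargeOf h) h = flipOn (2 * k) (2 * l) h := by
  funext i
  unfold applyCharge flipOn
  split_ifs
  · cases hi : h i <;> simp [chargeOf, hi]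
  · rfl

lemma forbiddenAt_iff {i : ℤ} :
    forbiddenAt h i ↔ h (2 * i - 1) ≠ h (2 * i) ∧ h (2 * i) ≠ h (2 * i + 1) := by
  unfold forbiddenAt
  cases h (2 * i - 1) <;> cases h (2 * i) <;> cases h (2 * i + 1) <;> simp

lemma memXi_chargeOf {k l : ℤ} (hforb : ∀ i, k < i → i < l → ¬ forbiddenAt h i)
    (hL : h (2 * k) = h (2 * k + 1)) (hR : h (2 * l - 1) = h (2 * l)) :
    memXi k l (chargeOf h) := by
  refine ⟨fun i _ => ?_, fun i hki hil => ?_, by simp [chargeOf, hL], by simp [chargeOf, hR]⟩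
  · cases hi : h i <;> simp [chargeOf, hi]
  · simp only [chargeOf_eq_one_iff, chargeOf_eq_neg_one_iff]
    have := hforb i hki hil
    simp only [forbiddenAt] at this
    tauto

lemma flipOn_flipOn_self (s t : ℤ) (h : ℤ → Bool) : flipOn s t (flipOn s t h) = h := by
  funext i
  unfold flipOn
  split_ifs <;> simp

lemma flipOn_flipOn_of_le {s u t : ℤ} (hsu : s ≤ u) (hut : u ≤ t + 1) (h : ℤ → Bool) :
    flipOn s t (flipOn u t h) = flipOn s (u - 1) h := by
  funext i
  unfold flipOn
  split_ifs <;> first | omega | simp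

lemma flipOn_eq_iff {s t x y : ℤ} (hy : y = x + 1) (hxs : x ≠ s - 1) (hxt : x ≠ t) :
    flipOn s t h x = flipOn s t h y ↔ h x = h y := by
  subst hy
  unfold flipOn
  split_ifs <;> first | omega | simp

lemma flipOn_right_eq_iff {s t y : ℤ} (hy : y = t + 1) (hst : s ≤ t) :
    flipOn s t h t = flipOn s t h y ↔ h t ≠ h y := by
  subst hy
  unfold flipOn
  split_ifs <;> first | omega | simp [Bool.eq_not]

end Flips

section OpenSusy

/-- A configuration of `Υ̂_{0,n}`, extended by `false` outside `S = {0, …, 2n}`. -/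
def IsOpenSusy (n : ℤ) (h : ℤ → Bool) : Prop :=
  memUps 0 n h ∧ ∀ i, i < 0 ∨ 2 * n < i → h i = false

variable {n : ℤ} {h : ℤ → Bool}

lemma isOpenSusy_vacuum (n : ℤ) : IsOpenSusy n fun _ => false :=
  ⟨⟨fun _ _ _ => by simp [forbiddenAt], rfl, rfl⟩, fun _ _ => rfl⟩

/-- A window flip toggles only the two domain walls just outside the window; `hL` and `hR` keep
them from forming forbidden triplets. -/
lemma IsOpenSusy.flipOn_two_mul (hh : IsOpenSusy n h) {k l : ℤ} (hk : 0 ≤ k) (hkl : k < l)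
    (hl : l ≤ n)
    (hL : h (2 * k) = h (2 * k + 1)) (hR : h (2 * l - 1) = h (2 * l)) :
    IsOpenSusy n (flipOn (2 * k) (2 * l) h) := by
  obtain ⟨⟨hforb, h01, hend⟩, hout⟩ := hh
  refine ⟨⟨fun i hi hin => ?_, ?_, ?_⟩, fun i hi => ?_⟩
  · have hi' := hforb i hi hin
    rw [forbiddenAt_iff] at hi' ⊢
    simp only [ne_eq] at hi' ⊢
    by_cases hik : i = k
    · subst hik
      rw [flipOn_eq_iff rfl (by omega) (by omega)]
      exact fun hc => hc.2 hL
    by_cases hil : i = l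
    · subst hil
      rw [flipOn_eq_iff (by ring) (by omega) (by omega)]
      exact fun hc => hc.1 hR
    rwa [flipOn_eq_iff (by ring) (by omega) (by omega), flipOn_eq_iff rfl (by omega) (by omega)]
  · rwa [flipOn_eq_iff rfl (by omega) (by omega)]
  · rwa [flipOn_eq_iff (by ring) (by omega) (by omega)]
  · exact (if_neg (by omega)).trans (hout i hi)

lemma Reachable.flipOn_two_mul {h₀ : ℤ → Bool} (hr : Reachable 0 n h₀ h) (hh : IsOpenSusy n h)
    {k l : ℤ} (hk : 0 ≤ k) (hkl : k < l) (hl : l ≤ n)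
    (hL : h (2 * k) = h (2 * k + 1)) (hR : h (2 * l - 1) = h (2 * l)) :
    Reachable 0 n h₀ (flipOn (2 * k) (2 * l) h) := by
  rw [← applyCharge_chargeOf]
  exact hr.step k l _ hk hkl hl
    (memXi_chargeOf (fun i hi hil => hh.1.1 i (by omega) (by omega)) hL hR)
    (applicable_chargeOf k l h)

end OpenSusy

section Walls

noncomputable def walls (n : ℤ) (h : ℤ → Bool) : Finset ℤ :=
  (Finset.Ico 0 (2 * n)).filter fun e => h e ≠ h (e + 1)

variable {n : ℤ} {h : ℤ → Bool}

lemma walls_flipOn_zero {m : ℤ} (hm : m ∈ walls n h) :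
    walls n (flipOn 0 m h) = (walls n h).erase m := by
  ext e
  simp only [walls, Finset.mem_filter, Finset.mem_erase, Finset.mem_Ico, ne_eq] at hm ⊢
  by_cases hem : e = m
  · subst hem
    rw [flipOn_right_eq_iff rfl hm.1.1]
    tauto
  · by_cases he : 0 ≤ e
    · rw [flipOn_eq_iff rfl (by omega) hem]
      tauto
    · omega

lemma eq_vacuum_or_eq_full_of_walls_eq_empty (hh : IsOpenSusy n h) (hw : walls n h = ∅) :
    h = (fun _ => false) ∨ h = flipOn 0 (2 * n) fun _ => false := by
  have hconst : ∀ i, 0 ≤ i → i ≤ 2 * n → h i = h 0 := by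
    intro i hi
    induction i, hi using Int.leInduction with
    | base => exact fun _ => rfl
    | succ i hi ih =>
      intro hin
      have : i ∉ walls n h := by simp [hw]
      simp only [walls, Finset.mem_filter, Finset.mem_Ico, not_and, not_not] at this
      rw [← this ⟨hi, by omega⟩, ih (by omega)]
  cases h0 : h 0
  · left
    funext i
    by_cases hi : 0 ≤ i ∧ i ≤ 2 * n
    · rw [hconst i hi.1 hi.2, h0]
    · exact hh.2 i (by omega)
  · right
    funext i
    unfold flipOn
    split_ifs with hi
    · rw [hconst i hi.1 hi.2, h0]
      rfl
    · exact hh.2 i (by omega)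

end Walls

section Reachability

variable {n : ℤ} {h : ℤ → Bool}

lemma IsOpenSusy.flipOn_zero_of_even_wall (hh : IsOpenSusy n h) {l : ℤ}
    (hw : 2 * l ∈ walls n h) :
    IsOpenSusy n (flipOn 0 (2 * l) h) ∧
      ∀ h₀, Reachable 0 n h₀ (flipOn 0 (2 * l) h) → Reachable 0 n h₀ h := by
  have ⟨⟨hforb, h01, _⟩, _⟩ := hh
  simp only [walls, Finset.mem_filter, Finset.mem_Ico] at hw
  have hl0 : 0 < l := by
    by_contra
    obtain rfl : l = 0 := by omega
    exact hw.2 (by simpa using h01)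
  have hln : l < n := by omega
  have hR : h (2 * l - 1) = h (2 * l) := by
    by_contra hne
    exact hforb l hl0 hln (forbiddenAt_iff.mpr ⟨hne, hw.2⟩)
  have hsusy : IsOpenSusy n (flipOn 0 (2 * l) h) := by
    simpa using hh.flipOn_two_mul le_rfl hl0 hln.le h01 hR
  refine ⟨hsusy, fun h₀ hr => ?_⟩
  have := hr.flipOn_two_mul hsusy le_rfl hl0 hln.le hsusy.1.2.1
    ((flipOn_eq_iff (by ring) (by omega) (by omega)).mpr hR)
  simpa [flipOn_flipOn_self] using this

/-- An odd wall `2k - 1` is removed by flipping `[2k, 2n]` and then all of `S`. -/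
lemma IsOpenSusy.flipOn_zero_of_odd_max_wall (hh : IsOpenSusy n h) {k : ℤ}
    (hw : 2 * k - 1 ∈ walls n h) (hmax : ∀ e ∈ walls n h, e ≤ 2 * k - 1) :
    IsOpenSusy n (flipOn 0 (2 * k - 1) h) ∧
      ∀ h₀, Reachable 0 n h₀ (flipOn 0 (2 * k - 1) h) → Reachable 0 n h₀ h := by
  have hend := hh.1.2.2
  simp only [walls, Finset.mem_filter, Finset.mem_Ico] at hw hmax
  have hk0 : 0 < k := by omega
  have hkn : k < n := by
    by_contra
    obtain rfl : k = n := by omega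
    exact hw.2 (by simpa using hend)
  have hL : h (2 * k) = h (2 * k + 1) := by
    by_contra hne
    have := hmax (2 * k) ⟨by omega, hne⟩
    omega
  have hcomp :
      ∀ h', flipOn (2 * 0) (2 * n) (flipOn (2 * k) (2 * n) h') = flipOn 0 (2 * k - 1) h' :=
    flipOn_flipOn_of_le (by omega) (by omega)
  have h₁ := hh.flipOn_two_mul hk0.le hkn le_rfl hL hend
  have hsusy : IsOpenSusy n (flipOn 0 (2 * k - 1) h) := by
    rw [← hcomp]
    exact h₁.flipOn_two_mul le_rfl (by omega) le_rfl h₁.1.2.1 h₁.1.2.2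
  refine ⟨hsusy, fun h₀ hr => ?_⟩
  have h₂ := hsusy.flipOn_two_mul hk0.le hkn le_rfl
    ((flipOn_eq_iff rfl (by omega) (by omega)).mpr hL) hsusy.1.2.2
  have hr₂ := hr.flipOn_two_mul hsusy hk0.le hkn le_rfl
    ((flipOn_eq_iff rfl (by omega) (by omega)).mpr hL) hsusy.1.2.2
  have := hr₂.flipOn_two_mul h₂ le_rfl (by omega) le_rfl h₂.1.2.1 h₂.1.2.2
  rwa [hcomp, flipOn_flipOn_self] at this

lemma reachable_of_isOpenSusy (hn : 0 < n) (hh : IsOpenSusy n h) :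
    Reachable 0 n (fun _ => false) h := by
  induction hc : (walls n h).card using Nat.strong_induction_on generalizing h with
  | _ c ih =>
  rcases (walls n h).eq_empty_or_nonempty with hw | hw
  · rcases eq_vacuum_or_eq_full_of_walls_eq_empty hh hw with rfl | rfl
    · exact .refl _
    · simpa using (Reachable.refl _).flipOn_two_mul (isOpenSusy_vacuum n) le_rfl hn le_rfl rfl rfl
  · obtain ⟨m, hm, hmax⟩ : ∃ m ∈ walls n h, ∀ e ∈ walls n h, e ≤ m :=
      ⟨_, Finset.max'_mem _ hw, fun e he => Finset.le_max' _ e he⟩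
    suffices IsOpenSusy n (flipOn 0 m h) ∧
        ∀ h₀, Reachable 0 n h₀ (flipOn 0 m h) → Reachable 0 n h₀ h by
      obtain ⟨hsusy, hback⟩ := this
      refine hback _ (ih _ ?_ hsusy rfl)
      rw [← hc, walls_flipOn_zero hm]
      exact Finset.card_erase_lt_of_mem hm
    obtain ⟨j, rfl | rfl⟩ := Int.even_or_odd' m
    · exact IsOpenSusy.flipOn_zero_of_even_wall hh hm
    · rw [show 2 * j + 1 = 2 * (j + 1) - 1 by ring] at *
      exact IsOpenSusy.flipOn_zero_of_odd_max_wall hh hm hmax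

end Reachability

section FockGenerated

def FockGenerated (n : ℤ) (ψ : Hs 0 (2 * n)) : Prop :=
  ∃ L : List ((ℤ × ℤ) × (ℤ → ℤ)), L ≠ [] ∧
    (∀ c ∈ L, 0 ≤ c.1.1 ∧ c.1.1 < c.1.2 ∧ c.1.2 ≤ n ∧ memXi c.1.1 c.1.2 c.2) ∧
    ∃ N : ℕ, (L.map fun c => QF 0 (2 * n) c.1.1 c.1.2 c.2).prod (e 0 (2 * n) fun _ => false)
      = (-1 : ℂ) ^ N • ψ

variable {n : ℤ}

lemma FockGenerated.applyCharge {h : ℤ → Bool}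
    (hψ : FockGenerated n (e 0 (2 * n) (restrict 0 (2 * n) h)))
    {k l : ℤ} {f : ℤ → ℤ} (hk : 0 ≤ k) (hkl : k < l) (hl : l ≤ n) (hf : memXi k l f)
    (happ : applicable k l f h) :
    FockGenerated n (e 0 (2 * n) (restrict 0 (2 * n) (applyCharge k l f h))) := by
  obtain ⟨L, -, hL, N, hN⟩ := hψ
  obtain ⟨M, hM⟩ := QF_apply_e (a := 0) (b := 2 * n) (by omega) (by omega) f h hf.1 happ
  refine ⟨((k, l), f) :: L, List.cons_ne_nil _ _, ?_, M + N, ?_⟩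
  · simp only [List.mem_cons, forall_eq_or_imp]
    exact ⟨⟨hk, hkl, hl, hf⟩, hL⟩
  · rw [List.map_cons, List.prod_cons, Module.End.mul_apply, hN, map_smul, hM, smul_smul,
      ← pow_add, add_comm N]

lemma Reachable.fockGenerated {h₀ h : ℤ → Bool} (hr : Reachable 0 n h₀ h)
    (h₀gen : FockGenerated n (e 0 (2 * n) (restrict 0 (2 * n) h₀))) :
    FockGenerated n (e 0 (2 * n) (restrict 0 (2 * n) h)) := by
  induction hr with
  | refl => exact h₀gen
  | step k l f _ hk hkl hl hf happ ih => exact ih.applyCharge hk hkl hl hf happ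

/-- The Fock vector itself is reached by a nonempty word: fill all of `S`, then empty it. -/
lemma fockGenerated_vacuum (hn : 0 < n) :
    FockGenerated n (e 0 (2 * n) (restrict 0 (2 * n) fun _ => false)) := by
  set full := flipOn 0 (2 * n) fun _ => false
  have hfull : IsOpenSusy n full := by
    simpa using (isOpenSusy_vacuum n).flipOn_two_mul le_rfl hn le_rfl rfl rfl
  have hcharge : ∀ h, IsOpenSusy n h → memXi 0 n (chargeOf h) :=
    fun h hh => memXi_chargeOf hh.1.1 hh.1.2.1 hh.1.2.2
  obtain ⟨N, hN⟩ := QF_apply_e (a := 0) (b := 2 * n) (by omega) le_rfl _ _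
    (hcharge _ (isOpenSusy_vacuum n)).1 (applicable_chargeOf 0 n fun _ => false)
  rw [applyCharge_chargeOf, mul_zero] at hN
  have hgen : FockGenerated n (e 0 (2 * n) (restrict 0 (2 * n) full)) := by
    refine ⟨[((0, n), chargeOf fun _ => false)], List.cons_ne_nil _ _, ?_, N, ?_⟩
    · simpa using ⟨hn, hcharge _ (isOpenSusy_vacuum n)⟩
    · simp only [List.map_cons, List.map_nil, List.prod_cons, List.prod_nil, mul_one]
      exact hN
  simpa [applyCharge_chargeOf, full, flipOn_flipOn_self] using
    hgen.applyCharge le_rfl hn le_rfl (hcharge full hfull) (applicable_chargeOf 0 n full)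

end FockGenerated

/-- every configuration in `Υ̂_{0,n}` is obtained, up to a sign, by
applying finitely many local fermion charge operators `Q(f_j)`, `f_j ∈ Ξ̂(0,n)`,
to the Fock vector on `S = {0, …, 2n}`. -/
theorem ground_state_from_local_fermion_charges (n : ℕ) (hn : 1 ≤ n)
    (g : Config 0 (2 * (n : ℤ)))
    (hg : memUps 0 (n : ℤ) (ext 0 (2 * (n : ℤ)) g)) :
    ∃ L : List ((ℤ × ℤ) × (ℤ → ℤ)), L ≠ [] ∧
      (∀ c ∈ L, 0 ≤ c.1.1 ∧ c.1.1 < c.1.2 ∧ c.1.2 ≤ (n : ℤ) ∧ memXi c.1.1 c.1.2 c.2) ∧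
      ∃ ε : ℂ, (ε = 1 ∨ ε = -1) ∧
        (L.map fun c => QF 0 (2 * (n : ℤ)) c.1.1 c.1.2 c.2).prod
            (e 0 (2 * (n : ℤ)) (fun _ => false))
          = ε • e 0 (2 * (n : ℤ)) g := by
  have hn' : (0 : ℤ) < n := by omega
  have hsusy : IsOpenSusy n (ext 0 (2 * n) g) :=
    ⟨hg, fun i hi => dif_neg (by simp only [Finset.mem_Icc]; omega)⟩
  obtain ⟨L, hL, hmem, N, hN⟩ :=
    (reachable_of_isOpenSusy hn' hsusy).fockGenerated (fockGenerated_vacuum hn')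
  rw [restrict_ext] at hN
  exact ⟨L, hL, hmem, _, neg_one_pow_eq_or ℂ N, hN⟩

end Nicolai
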